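/- arXiv:2005.14485 — 3 statements merged into one kernel-verified Lean document; each statement's English description precedes it below -/
import Mathlib

section
/- Ryser's formula: for an m×m matrix A over a commutative ring, per(A) = Σ_{M ⊆ {1,...,m}} (−1)^{m−|M|} ∏_{i=1}^m Σ_{j∈M} A_{i,j}. -/
open Finset

lemma neg_one_pow_sum_powerset {R : Type*} [CommRing R] {α : Type*} [DecidableEq α]
    (S : Finset α) : (∑ T ∈ S.powerset, (-1 : R) ^ T.card) = if S = ∅ then 1 else 0 := by
  have h := @Finset.sum_powerset_neg_one_pow_card α _ S
  have h2 := congrArg (fun z : ℤ => (z : R)) h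
  push_cast at h2
  split at h2 <;> split <;> simp_all

lemma ryser_inner {R : Type*} [CommRing R] (m : ℕ) (f : Fin m → Fin m) :
    ∑ M : Finset (Fin m), (if ∀ i, f i ∈ M then (-1 : R) ^ (m - M.card) else 0)
      = if Function.Surjective f then 1 else 0 := by
  have hbij : Function.Bijective (fun M : Finset (Fin m) => Mᶜ) :=
    Function.Involutive.bijective (fun M => compl_compl M)
  rw [← Function.Bijective.sum_comp hbij
      (fun M => if ∀ i, f i ∈ M then (-1 : R) ^ (m - M.card) else 0)]
  have : ∀ M : Finset (Fin m),
      (if ∀ i, f i ∈ Mᶜ then (-1 : R) ^ (m - Mᶜ.card) else 0)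
        = if M ∈ (Finset.univ.image f)ᶜ.powerset then (-1 : R) ^ M.card else 0 := by
    intro M
    have hcard : m - Mᶜ.card = M.card := by
      rw [Finset.card_compl]
      have := M.card_le_univ
      simp only [Finset.card_univ, Fintype.card_fin] at this ⊢
      omega
    congr 1
    · simp only [eq_iff_iff, Finset.mem_powerset]
      constructor
      · intro h x hx
        rw [Finset.mem_compl]
        intro hxim
        obtain ⟨i, -, rfl⟩ := Finset.mem_image.mp hxim
        exact (Finset.mem_compl.mp (h i)) hx
      · intro h i
        simp only [Finset.mem_compl]
        intro hfi
        exact Finset.mem_compl.mp (h hfi) (Finset.mem_image_of_mem f (Finset.mem_univ i))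
    · rw [hcard]
  simp_rw [this]
  rw [← Finset.sum_filter, Finset.filter_mem_eq_inter, Finset.univ_inter,
    neg_one_pow_sum_powerset]
  congr 1
  simp only [eq_iff_iff, Finset.compl_eq_empty_iff]
  constructor
  · intro h x
    have := h ▸ Finset.mem_univ x
    simpa using Finset.mem_image.mp this
  · intro h
    ext x
    simpa using h x

/-- Ryser's formula:
`per(A) = Σ_{M ⊆ {1,…,m}} (−1)^{m−|M|} ∏_{i=1}^m Σ_{j∈M} A i j`. -/
theorem stmt5 {R : Type*} [CommRing R] (m : ℕ) (A : Matrix (Fin m) (Fin m) R) :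
    A.permanent
      = ∑ M : Finset (Fin m), (-1 : R) ^ (m - M.card) * ∏ i, ∑ j ∈ M, A i j := by
  have expand : ∀ M : Finset (Fin m),
      ∏ i, ∑ j ∈ M, A i j
        = ∑ f : Fin m → Fin m, if ∀ i, f i ∈ M then ∏ i, A i (f i) else 0 := by
    intro M
    rw [Finset.prod_univ_sum (fun _ => M) (fun i j => A i j)]
    rw [← Finset.sum_filter]
    apply Finset.sum_congr _ (fun _ _ => rfl)
    ext f
    simp [Fintype.mem_piFinset]
  simp_rw [expand, Finset.mul_sum, mul_ite, mul_zero]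
  rw [Finset.sum_comm]
  have inner : ∀ f : Fin m → Fin m,
      (∑ M : Finset (Fin m), if ∀ i, f i ∈ M then
          (-1 : R) ^ (m - M.card) * ∏ i, A i (f i) else 0)
        = (if Function.Surjective f then 1 else 0) * ∏ i, A i (f i) := by
    intro f
    rw [← ryser_inner m f, Finset.sum_mul]
    exact Finset.sum_congr rfl fun M _ => by split <;> simp
  simp_rw [inner, ite_mul, one_mul, zero_mul]
  rw [← Finset.sum_filter]
  rw [← Matrix.permanent_transpose]
  unfold Matrix.permanent
  apply Finset.sum_bij (fun (σ : Equiv.Perm (Fin m)) _ => (σ : Fin m → Fin m))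
  · intro σ _
    simp [Equiv.surjective σ]
  · intro σ _ τ _ h
    exact Equiv.coe_fn_injective h
  · intro f hf
    have hs : Function.Surjective f := by simpa using hf
    have hb : Function.Bijective f := Finite.surjective_iff_bijective.mp hs
    exact ⟨Equiv.ofBijective f hb, Finset.mem_univ _, rfl⟩
  · intro σ _
    simp [Matrix.transpose_apply]
end

section
/- Robbins' bounds: for every positive integer n, √(2π)·n^{n+1/2}·e^{−n}·e^{1/(12n+1)} < n! < √(2π)·n^{n+1/2}·e^{−n}·e^{1/(12n)}. -/
/-!
With `s n = n! / (√(2n) (n/e)^n)` (Mathlib's `stirlingSeq`), `s n → √π`, and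
`log s n - log s (n+1) = ∑_{k ≥ 1} r^k / (2k+1)` with `r = (2n+1)⁻²`. Bounding every
coefficient by `1/3` (a geometric series) and, in the other direction, keeping only the first
term gives
`1/(12n+1) - 1/(12(n+1)+1) < log s n - log s (n+1) < 1/(12n) - 1/(12(n+1))`.
Hence `log s n - 1/(12n)` strictly increases and `log s n - 1/(12n+1)` strictly decreases, both to
`log √π`, which bounds `s n / √π` strictly between `exp (1/(12n+1))` and `exp (1/(12n))`.
-/

open Filter Topology Real Stirling

section

variable {α β : Type*} [TopologicalSpace α] [Preorder α] [OrderClosedTopology α]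
  [PartialOrder β] [IsDirectedOrder β] [NoMaxOrder β] {f : β → α} {a : α}

theorem StrictMono.lt_of_tendsto (hf : StrictMono f) (ha : Tendsto f atTop (𝓝 a)) (b : β) :
    f b < a :=
  let ⟨c, hbc⟩ := exists_gt b
  (hf hbc).trans_le (hf.monotone.ge_of_tendsto ha c)

theorem StrictAnti.lt_of_tendsto (hf : StrictAnti f) (ha : Tendsto f atTop (𝓝 a)) (b : β) :
    a < f b :=
  let ⟨c, hbc⟩ := exists_gt b
  (hf.antitone.le_of_tendsto ha c).trans_lt (hf hbc)

end

theorem tendsto_one_div_mul_add_atTop {a : ℝ} (ha : 0 < a) (c : ℝ) :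
    Tendsto (fun n : ℕ => 1 / (a * n + c)) atTop (𝓝 0) := by
  simpa only [one_div, Pi.inv_def] using (tendsto_atTop_add_const_right _ c
    (tendsto_natCast_atTop_atTop.const_mul_atTop ha)).inv_tendsto_atTop

namespace Stirling

theorem hasSum_log_stirlingSeq_sdiff {n : ℕ} (hn : n ≠ 0) :
    HasSum
      (fun k : ℕ => 1 / (2 * ((k : ℝ) + 1) + 1) * ((1 / (2 * (n : ℝ) + 1)) ^ 2) ^ (k + 1))
      (log (stirlingSeq n) - log (stirlingSeq (n + 1))) := by
  obtain ⟨m, rfl⟩ := Nat.exists_eq_succ_of_ne_zero hn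
  exact_mod_cast log_stirlingSeq_sdiff_hasSum m

theorem log_stirlingSeq_sdiff_lt {n : ℕ} (hn : n ≠ 0) :
    log (stirlingSeq n) - log (stirlingSeq (n + 1)) < 1 / (12 * n) - 1 / (12 * (n + 1)) := by
  have hn0 : (0 : ℝ) < n := by positivity
  set r : ℝ := (1 / (2 * (n : ℝ) + 1)) ^ 2 with hr
  have hr0 : 0 < r := by positivity
  have hr1 : r < 1 := by rw [hr, div_pow, one_pow, div_lt_one (by positivity)]; nlinarith
  have hgeo : HasSum (fun k : ℕ => r ^ (k + 1) / 3) ((1 - r)⁻¹ * r / 3) := by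
    simpa only [pow_succ] using ((hasSum_geometric_of_lt_one hr0.le hr1).mul_right r).div_const 3
  have hsum : (1 - r)⁻¹ * r / 3 = 1 / (12 * n) - 1 / (12 * (n + 1)) := by
    have h1r : 1 - r = 4 * n * (n + 1) * r := by rw [hr]; field_simp; ring
    rw [h1r]
    field_simp
    ring
  rw [← hsum]
  refine hasSum_lt (i := 1) (fun k => ?_) ?_ (hasSum_log_stirlingSeq_sdiff hn) hgeo
  · rw [one_div_mul_eq_div]
    gcongr
    linarith [k.cast_nonneg (α := ℝ)]
  · -- the coefficient `1/5` of `r ^ 2` is strictly below `1/3`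
    rw [one_div_mul_eq_div]
    gcongr
    norm_num

theorem lt_log_stirlingSeq_sdiff {n : ℕ} (hn : n ≠ 0) :
    1 / (12 * n + 1) - 1 / (12 * (n + 1) + 1) <
      log (stirlingSeq n) - log (stirlingSeq (n + 1)) := by
  have hn1 : (1 : ℝ) ≤ n := by exact_mod_cast Nat.one_le_iff_ne_zero.mpr hn
  refine lt_of_lt_of_le ?_ (le_hasSum (hasSum_log_stirlingSeq_sdiff hn) 0 fun k _ => by positivity)
  calc 1 / (12 * (n : ℝ) + 1) - 1 / (12 * (n + 1) + 1) = 12 / ((12 * n + 1) * (12 * n + 13)) := by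
        field_simp; ring
    _ < 1 / (3 * (2 * n + 1) ^ 2) := by
        rw [div_lt_div_iff₀ (by positivity) (by positivity)]; nlinarith
    _ = _ := by push_cast; field_simp; norm_num

theorem tendsto_log_stirlingSeq : Tendsto (fun n => log (stirlingSeq n)) atTop (𝓝 (log √π)) :=
  tendsto_stirlingSeq_sqrt_pi.log (sqrt_pos.mpr pi_pos).ne'

theorem log_stirlingSeq_lt {n : ℕ} (hn : n ≠ 0) :
    log (stirlingSeq n) < log √π + 1 / (12 * n) := by
  set g : ℕ → ℝ := fun n => log (stirlingSeq n) - 1 / (12 * n)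
  have hlim : Tendsto g atTop (𝓝 (log √π)) := by
    simpa [g] using
      tendsto_log_stirlingSeq.sub (tendsto_one_div_mul_add_atTop (a := 12) (by norm_num) 0)
  have hmono : StrictMono (g ∘ (· + 1)) := strictMono_nat_of_lt_succ fun k => by
    have := log_stirlingSeq_sdiff_lt k.succ_ne_zero
    simp only [g, Function.comp]; push_cast at this ⊢; linarith
  obtain ⟨m, rfl⟩ := Nat.exists_eq_succ_of_ne_zero hn
  have := hmono.lt_of_tendsto (hlim.comp (tendsto_add_atTop_nat 1)) m
  simp only [g, Function.comp] at this
  linarith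

theorem log_sqrt_pi_add_lt_log_stirlingSeq {n : ℕ} (hn : n ≠ 0) :
    log √π + 1 / (12 * n + 1) < log (stirlingSeq n) := by
  set g : ℕ → ℝ := fun n => log (stirlingSeq n) - 1 / (12 * n + 1)
  have hlim : Tendsto g atTop (𝓝 (log √π)) := by
    simpa [g] using
      tendsto_log_stirlingSeq.sub (tendsto_one_div_mul_add_atTop (a := 12) (by norm_num) 1)
  have hanti : StrictAnti (g ∘ (· + 1)) := strictAnti_nat_of_succ_lt fun k => by
    have := lt_log_stirlingSeq_sdiff k.succ_ne_zero
    simp only [g, Function.comp]; push_cast at this ⊢; linarith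
  obtain ⟨m, rfl⟩ := Nat.exists_eq_succ_of_ne_zero hn
  have := hanti.lt_of_tendsto (hlim.comp (tendsto_add_atTop_nat 1)) m
  simp only [g, Function.comp] at this
  linarith

theorem stirlingSeq_pos {n : ℕ} (hn : n ≠ 0) : 0 < stirlingSeq n := by
  unfold stirlingSeq; positivity

theorem exp_lt_stirlingSeq_div_sqrt_pi {n : ℕ} (hn : n ≠ 0) :
    exp (1 / (12 * n + 1)) < stirlingSeq n / √π := by
  rw [← lt_log_iff_exp_lt (by have := stirlingSeq_pos hn; positivity),
    log_div (stirlingSeq_pos hn).ne' (by positivity)]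
  linarith [log_sqrt_pi_add_lt_log_stirlingSeq hn]

theorem stirlingSeq_div_sqrt_pi_lt_exp {n : ℕ} (hn : n ≠ 0) :
    stirlingSeq n / √π < exp (1 / (12 * n)) := by
  rw [← log_lt_iff_lt_exp (by have := stirlingSeq_pos hn; positivity),
    log_div (stirlingSeq_pos hn).ne' (by positivity)]
  linarith [log_stirlingSeq_lt hn]

theorem factorial_eq_stirlingSeq_div_sqrt_pi_mul {n : ℕ} (hn : n ≠ 0) :
    (n.factorial : ℝ) =
      stirlingSeq n / √π * (√(2 * π) * (n : ℝ) ^ ((n : ℝ) + 1 / 2) * exp (-n)) := by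
  have hn0 : (0 : ℝ) < n := by positivity
  rw [stirlingSeq, rpow_add hn0, rpow_natCast, ← sqrt_eq_rpow, sqrt_mul zero_le_two,
    sqrt_mul zero_le_two, div_pow, exp_one_pow, exp_neg]
  field_simp

end Stirling

/-- Robbins' bounds: for every positive integer `n`,
`√(2π)·n^{n+1/2}·e^{−n}·e^{1/(12n+1)} < n! < √(2π)·n^{n+1/2}·e^{−n}·e^{1/(12n)}`. -/
theorem stmt8 (n : ℕ) (hn : 1 ≤ n) :
    Real.sqrt (2 * Real.pi) * (n : ℝ) ^ ((n : ℝ) + 1 / 2) * Real.exp (-(n : ℝ)) *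
        Real.exp (1 / (12 * (n : ℝ) + 1)) < (n.factorial : ℝ) ∧
    (n.factorial : ℝ) < Real.sqrt (2 * Real.pi) * (n : ℝ) ^ ((n : ℝ) + 1 / 2) *
        Real.exp (-(n : ℝ)) * Real.exp (1 / (12 * (n : ℝ))) := by
  have hn0 : n ≠ 0 := Nat.one_le_iff_ne_zero.mp hn
  have hA : 0 < √(2 * π) * (n : ℝ) ^ ((n : ℝ) + 1 / 2) * exp (-n) := by positivity
  rw [factorial_eq_stirlingSeq_div_sqrt_pi_mul hn0, mul_comm (stirlingSeq n / √π)]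
  exact ⟨mul_lt_mul_of_pos_left (exp_lt_stirlingSeq_div_sqrt_pi hn0) hA,
    mul_lt_mul_of_pos_left (stirlingSeq_div_sqrt_pi_lt_exp hn0) hA⟩
end

section
/- The m-Bézout bound of a multihomogeneous polynomial system, defined as the coefficient of X_1^{m_1}···X_k^{m_k} in ∏_{i=1}^m (α_{i,1}X_1 + ··· + α_{i,k}X_k), equals (1/(m_1!···m_k!))·per(A), where A is the m×m matrix whose i-th column consists of the value α_{i,j} repeated m_j times in the block of rows associated with the j-th variable group. -/
open MvPolynomial

/-- Product of monomials is a monomial. -/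
lemma prod_monomial_aux {ι σ R : Type*} [CommSemiring R] (s : Finset ι) (d : ι → σ →₀ ℕ)
    (a : ι → R) :
    ∏ i ∈ s, MvPolynomial.monomial (d i) (a i) =
      MvPolynomial.monomial (∑ i ∈ s, d i) (∏ i ∈ s, a i) := by
  classical
  induction s using Finset.cons_induction with
  | empty => simp
  | cons i s hi ih =>
      rw [Finset.prod_cons, Finset.sum_cons, Finset.prod_cons, ih, MvPolynomial.monomial_mul]

/-- Permutations `τ` with `blk ∘ τ = g` correspond to families of fiber bijections. -/
def fiberPermEquiv {m k : ℕ} (blk g : Fin m → Fin k) :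
    {τ : Equiv.Perm (Fin m) // ∀ i, blk (τ i) = g i} ≃
      (∀ j, {i // g i = j} ≃ {i // blk i = j}) where
  toFun τ j :=
    { toFun := fun i => ⟨τ.1 i.1, by rw [τ.2 i.1, i.2]⟩
      invFun := fun i => ⟨τ.1.symm i.1, by
        have h := τ.2 (τ.1.symm i.1)
        rw [Equiv.apply_symm_apply] at h
        rw [← h, i.2]⟩
      left_inv := fun i => by simp
      right_inv := fun i => by simp }
  invFun e :=
    ⟨(Equiv.sigmaFiberEquiv g).symm.trans
        ((Equiv.sigmaCongrRight e).trans (Equiv.sigmaFiberEquiv blk)),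
      fun i => (e (g i) ⟨i, rfl⟩).2⟩
  left_inv τ := by
    apply Subtype.ext
    apply Equiv.ext
    intro i
    rfl
  right_inv e := by
    funext j
    apply Equiv.ext
    intro i
    apply Subtype.ext
    obtain ⟨i, rfl⟩ := i
    rfl

/-- the m-Bézout bound, i.e. the coefficient of `X_1^{m_1}⋯X_k^{m_k}`
in `∏_{i=1}^m (α_{i,1}X_1 + ⋯ + α_{i,k}X_k)`, equals `(1/(m_1!⋯m_k!))·per(A)`, where
`A` is the `m × m` matrix whose `i`-th column has value `α_{i,j}` on the `j`-th block
of rows (blocks of sizes `m_1,…,m_k`, encoded by `blk`). Stated multiplied through by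
`m_1!⋯m_k!`. -/
theorem stmt17 (m k : ℕ) (mj : Fin k → ℕ) (hm : m = ∑ j, mj j)
    (α : Fin m → Fin k → ℕ) (blk : Fin m → Fin k)
    (hblk : ∀ j, (Finset.univ.filter fun i => blk i = j).card = mj j) :
    ((∏ j, (mj j).factorial : ℕ) : ℤ) *
        MvPolynomial.coeff (∑ j, Finsupp.single j (mj j))
          (∏ i, ∑ j, MvPolynomial.C ((α i j : ℤ)) * MvPolynomial.X j)
      = (Matrix.of fun rI cI : Fin m => ((α cI (blk rI) : ℤ))).permanent := by
  classical
  -- Notation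
  set d : Fin k →₀ ℕ := ∑ j, Finsupp.single j (mj j) with hd
  -- the condition that a function `g` has fibers of cardinality `mj j`
  set P : (Fin m → Fin k) → Prop :=
    fun g => ∀ j, (Finset.univ.filter fun i => g i = j).card = mj j with hP
  -- Step 1: expand the product of linear forms
  have hexp : (∏ i, ∑ j, MvPolynomial.C ((α i j : ℤ)) * MvPolynomial.X j) =
      ∑ g : Fin m → Fin k, MvPolynomial.monomial (∑ i, Finsupp.single (g i) 1)
        (∏ i, (α i (g i) : ℤ)) := by
    rw [Finset.prod_univ_sum]
    refine Finset.sum_congr rfl fun g _ => ?_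
    rw [← prod_monomial_aux]
    refine Finset.prod_congr rfl fun i _ => ?_
    rw [MvPolynomial.X, MvPolynomial.C_mul_monomial, mul_one]
  -- Step 2: the monomial-matching condition
  have key1 : ∀ (g : Fin m → Fin k) (j : Fin k),
      (∑ i, Finsupp.single (g i) 1 : Fin k →₀ ℕ) j
        = (Finset.univ.filter fun i => g i = j).card := by
    intro g j
    rw [Finsupp.finset_sum_apply, Finset.card_filter]
    refine Finset.sum_congr rfl fun i _ => ?_
    rw [Finsupp.single_apply]
  have key2 : ∀ j : Fin k, d j = mj j := by
    intro j
    rw [hd, Finsupp.finset_sum_apply]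
    simp [Finsupp.single_apply]
  have hcond : ∀ g : Fin m → Fin k, (∑ i, Finsupp.single (g i) 1) = d ↔ P g := by
    intro g
    rw [Finsupp.ext_iff]
    refine forall_congr' fun j => ?_
    rw [key1 g j, key2 j]
  -- Step 3: compute the coefficient
  have hcoeff : MvPolynomial.coeff d
        (∏ i, ∑ j, MvPolynomial.C ((α i j : ℤ)) * MvPolynomial.X j) =
      ∑ g ∈ Finset.univ.filter P, ∏ i, (α i (g i) : ℤ) := by
    rw [hexp, MvPolynomial.coeff_sum]
    rw [Finset.sum_filter]
    refine Finset.sum_congr rfl fun g _ => ?_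
    rw [MvPolynomial.coeff_monomial]
    by_cases h : P g
    · rw [if_pos ((hcond g).2 h), if_pos h]
    · rw [if_neg (fun hh => h ((hcond g).1 hh)), if_neg h]
  -- Step 4: expand the permanent and regroup by `g = blk ∘ σ`
  have hmaps : ∀ σ : Equiv.Perm (Fin m), P (fun i => blk (σ i)) := by
    intro σ j
    rw [← hblk j]
    exact Finset.card_bij (fun i _ => σ i)
      (by intro i hi; simpa using (Finset.mem_filter.1 hi).2)
      (by intro a ha b hb hab; exact σ.injective hab)
      (by intro b hb; exact ⟨σ.symm b, by simpa using (Finset.mem_filter.1 hb).2, by simp⟩)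
  have hper : (Matrix.of fun rI cI : Fin m => ((α cI (blk rI) : ℤ))).permanent =
      ∑ g ∈ Finset.univ.filter P,
        ∑ σ ∈ Finset.univ.filter (fun σ : Equiv.Perm (Fin m) => (fun i => blk (σ i)) = g),
          ∏ i, (α i (blk (σ i)) : ℤ) := by
    have h0 : (Matrix.of fun rI cI : Fin m => ((α cI (blk rI) : ℤ))).permanent
        = ∑ σ : Equiv.Perm (Fin m), ∏ i, (α i (blk (σ i)) : ℤ) := rfl
    rw [h0, ← Finset.sum_fiberwise_of_maps_to
      (g := fun σ : Equiv.Perm (Fin m) => fun i => blk (σ i))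
      (fun σ _ => Finset.mem_filter.2 ⟨Finset.mem_univ _, hmaps σ⟩)
      (fun σ : Equiv.Perm (Fin m) => ∏ i, (α i (blk (σ i)) : ℤ))]
  -- Step 5: count the fibers
  have hcount : ∀ g ∈ Finset.univ.filter P,
      (Finset.univ.filter (fun σ : Equiv.Perm (Fin m) => (fun i => blk (σ i)) = g)).card
        = ∏ j, (mj j).factorial := by
    intro g hg
    have hgP : P g := (Finset.mem_filter.1 hg).2
    have h1 : (Finset.univ.filter
          (fun σ : Equiv.Perm (Fin m) => (fun i => blk (σ i)) = g)).card
        = Fintype.card {τ : Equiv.Perm (Fin m) // ∀ i, blk (τ i) = g i} := by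
      rw [Fintype.card_subtype]
      congr 1
      apply Finset.filter_congr
      intro σ _
      simp [funext_iff]
    rw [h1, Fintype.card_congr (fiberPermEquiv blk g), Fintype.card_pi]
    refine Finset.prod_congr rfl fun j _ => ?_
    have hcard1 : Fintype.card {i // g i = j} = mj j := by
      rw [Fintype.card_subtype]; exact hgP j
    have hcard2 : Fintype.card {i // blk i = j} = mj j := by
      rw [Fintype.card_subtype]; exact hblk j
    have e : {i // g i = j} ≃ {i // blk i = j} :=
      Fintype.equivOfCardEq (by rw [hcard1, hcard2])
    rw [Fintype.card_equiv e, hcard1]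
  -- Put everything together
  rw [hcoeff, hper, Finset.mul_sum]
  refine Finset.sum_congr rfl fun g hg => ?_
  have : ∑ σ ∈ Finset.univ.filter
        (fun σ : Equiv.Perm (Fin m) => (fun i => blk (σ i)) = g),
        ∏ i, (α i (blk (σ i)) : ℤ)
      = ∑ σ ∈ Finset.univ.filter
        (fun σ : Equiv.Perm (Fin m) => (fun i => blk (σ i)) = g),
        ∏ i, (α i (g i) : ℤ) := by
    refine Finset.sum_congr rfl fun σ hσ => ?_
    have hσ' := (Finset.mem_filter.1 hσ).2
    refine Finset.prod_congr rfl fun i _ => ?_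
    rw [congrFun hσ' i]
  rw [this, Finset.sum_const, hcount g hg]
  try rw [nsmul_eq_mul]
  try push_cast
  try ring
end
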